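/- arXiv:2506.14515 — 2 statements merged into one kernel-verified Lean document; each statement's English description precedes it below -/
import Mathlib

section
/- If f : ℝⁿ → ℝᵐ is L_f-Lipschitz in its parameters, i.e. ‖f(θ, x) − f(θ', x)‖ ≤ L_f‖θ − θ'‖ for all x, then for the FAMR solution θ* = θ₀ − (H+λI)⁻¹g and retrained solution w* = θ₀ − H⁻¹g, we have sup over x of ‖f(θ*, x) − f(w*, x)‖ ≤ L_f · λ‖g‖ / λ_min(H)². -/
/-!
By the resolvent identity `H⁻¹ - (H + λ)⁻¹ = λ H⁻¹ (H + λ)⁻¹` the two parameter vectors differ by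
`λ H⁻¹ (H + λ)⁻¹ g`. The lower bound `μ ‖v‖² ≤ ⟪v, H v⟫` passes to `H + λ` and gives
`‖H⁻¹‖, ‖(H + λ)⁻¹‖ ≤ 1/μ`, so the gap is at most `λ‖g‖/μ²`, and the Lipschitz bound carries it
over to the outputs.
-/

open scoped RealInnerProductSpace

namespace Matrix

variable {ι : Type*} [Fintype ι]

/-- For symmetric `M` the largest such `μ` is `λ_min(M)`. -/
def IsCoerciveWith (M : Matrix ι ι ℝ) (μ : ℝ) : Prop :=
  ∀ v : EuclideanSpace ℝ ι, μ * ‖v‖ ^ 2 ≤ ⟪v, WithLp.toLp 2 (M *ᵥ v)⟫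

namespace IsCoerciveWith

variable {M : Matrix ι ι ℝ} {μ : ℝ}

theorem mono {ν : ℝ} (h : M.IsCoerciveWith μ) (hνμ : ν ≤ μ) : M.IsCoerciveWith ν := fun v =>
  (mul_le_mul_of_nonneg_right hνμ (sq_nonneg ‖v‖)).trans (h v)

theorem mul_norm_le (h : M.IsCoerciveWith μ) (v : EuclideanSpace ℝ ι) :
    μ * ‖v‖ ≤ ‖WithLp.toLp 2 (M *ᵥ v)‖ := by
  rcases (norm_nonneg v).eq_or_lt with hv | hv
  · rw [← hv, mul_zero]
    exact norm_nonneg _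
  · refine le_of_mul_le_mul_right ?_ hv
    calc μ * ‖v‖ * ‖v‖ = μ * ‖v‖ ^ 2 := by ring
      _ ≤ ⟪v, WithLp.toLp 2 (M *ᵥ v)⟫ := h v
      _ ≤ ‖v‖ * ‖WithLp.toLp 2 (M *ᵥ v)‖ := real_inner_le_norm _ _
      _ = ‖WithLp.toLp 2 (M *ᵥ v)‖ * ‖v‖ := mul_comm _ _

variable [DecidableEq ι]

theorem add_smul_one (h : M.IsCoerciveWith μ) (c : ℝ) :
    (M + c • (1 : Matrix ι ι ℝ)).IsCoerciveWith (μ + c) := by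
  intro v
  have hquad : ⟪v, WithLp.toLp 2 ((M + c • 1) *ᵥ v)⟫
      = ⟪v, WithLp.toLp 2 (M *ᵥ v)⟫ + c * ‖v‖ ^ 2 := by
    rw [add_mulVec, smul_mulVec, one_mulVec, WithLp.toLp_add, WithLp.toLp_smul, WithLp.toLp_ofLp,
      inner_add_right, real_inner_smul_right, real_inner_self_eq_norm_sq]
  linarith [h v]

theorem isUnit (h : M.IsCoerciveWith μ) (hμ : 0 < μ) : IsUnit M := by
  refine mulVec_injective_iff_isUnit.mp fun v w hvw => ?_
  have hzero : μ * ‖WithLp.toLp 2 (v - w)‖ ≤ 0 := by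
    simpa [mulVec_sub, hvw] using h.mul_norm_le (WithLp.toLp 2 (v - w))
  have : WithLp.toLp 2 (v - w) = 0 := norm_le_zero_iff.mp (nonpos_of_mul_nonpos_right hzero hμ)
  exact sub_eq_zero.mp (congrArg WithLp.ofLp this)

theorem norm_inv_mulVec_le (h : M.IsCoerciveWith μ) (hμ : 0 < μ) (w : EuclideanSpace ℝ ι) :
    ‖WithLp.toLp 2 (M⁻¹ *ᵥ w)‖ ≤ ‖w‖ / μ := by
  rw [le_div_iff₀' hμ]
  simpa [mulVec_mulVec, mul_nonsing_inv _ ((isUnit_iff_isUnit_det M).mp (h.isUnit hμ))]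
    using h.mul_norm_le (WithLp.toLp 2 (M⁻¹ *ᵥ w))

theorem norm_inv_mulVec_sub_inv_add_smul_one_mulVec_le (h : M.IsCoerciveWith μ) (hμ : 0 < μ)
    {lam : ℝ} (hlam : 0 ≤ lam) (g : EuclideanSpace ℝ ι) :
    ‖WithLp.toLp 2 (M⁻¹ *ᵥ g) - WithLp.toLp 2 ((M + lam • (1 : Matrix ι ι ℝ))⁻¹ *ᵥ g)‖
      ≤ lam * ‖g‖ / μ ^ 2 := by
  have hreg : (M + lam • (1 : Matrix ι ι ℝ)).IsCoerciveWith μ :=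
    (h.add_smul_one lam).mono (le_add_of_nonneg_right hlam)
  have hdiff : M⁻¹ *ᵥ g - (M + lam • 1)⁻¹ *ᵥ g = M⁻¹ *ᵥ (lam • ((M + lam • 1)⁻¹ *ᵥ g)) := by
    rw [← sub_mulVec, inv_sub_inv (iff_of_true (h.isUnit hμ) (hreg.isUnit hμ)),
      add_sub_cancel_left, Matrix.mul_smul, Matrix.mul_one, Matrix.smul_mul, smul_mulVec,
      ← mulVec_mulVec, mulVec_smul]
  calc _ = ‖WithLp.toLp 2 (M⁻¹ *ᵥ (lam • ((M + lam • 1)⁻¹ *ᵥ g)))‖ := by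
        rw [← WithLp.toLp_sub, hdiff]
    _ ≤ ‖lam • WithLp.toLp 2 ((M + lam • 1)⁻¹ *ᵥ g)‖ / μ := h.norm_inv_mulVec_le hμ _
    _ = lam * ‖WithLp.toLp 2 ((M + lam • 1)⁻¹ *ᵥ g)‖ / μ := by
        rw [norm_smul, Real.norm_of_nonneg hlam]
    _ ≤ lam * (‖g‖ / μ) / μ := by gcongr; exact hreg.norm_inv_mulVec_le hμ g
    _ = lam * ‖g‖ / μ ^ 2 := by ring

end IsCoerciveWith

end Matrix

theorem famr_output_divergence_bound_general
    {n m : ℕ} {X : Type*}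
    (f : EuclideanSpace ℝ (Fin n) → X → EuclideanSpace ℝ (Fin m))
    (Lf : ℝ) (hLf : 0 ≤ Lf)
    (hlip : ∀ (x : X) (θ θ' : EuclideanSpace ℝ (Fin n)),
      ‖f θ x - f θ' x‖ ≤ Lf * ‖θ - θ'‖)
    (H : Matrix (Fin n) (Fin n) ℝ)
    (μ : ℝ) (hμ : 0 < μ)
    (hmin : ∀ v : EuclideanSpace ℝ (Fin n), μ * ‖v‖ ^ 2 ≤ ⟪v, (WithLp.equiv 2 (Fin n → ℝ)).symm (H.mulVec v)⟫)
    (g θ₀ ws θs : EuclideanSpace ℝ (Fin n)) (lam : ℝ) (hlam : 0 < lam)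
    (hws : ws = θ₀ - (WithLp.equiv 2 (Fin n → ℝ)).symm (H⁻¹.mulVec g))
    (hθs : θs = θ₀ - (WithLp.equiv 2 (Fin n → ℝ)).symm ((H + lam • (1 : Matrix (Fin n) (Fin n) ℝ))⁻¹.mulVec g)) :
    ∀ x : X, ‖f θs x - f ws x‖ ≤ Lf * (lam * ‖g‖ / μ ^ 2) := by
  intro x
  have hcoer : H.IsCoerciveWith μ := hmin
  have hshift : ‖θs - ws‖ ≤ lam * ‖g‖ / μ ^ 2 := by
    rw [hθs, hws, sub_sub_sub_cancel_left]
    exact hcoer.norm_inv_mulVec_sub_inv_add_smul_one_mulVec_le hμ hlam.le g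
  calc ‖f θs x - f ws x‖ ≤ Lf * ‖θs - ws‖ := hlip x θs ws
    _ ≤ Lf * (lam * ‖g‖ / μ ^ 2) := mul_le_mul_of_nonneg_left hshift hLf

/-- If f(·,x) is L_f-Lipschitz in the parameters uniformly in x, then for the
FAMR solution θ* = θ₀ − (H+λI)⁻¹g and retrained solution w* = θ₀ − H⁻¹g,
sup_x ‖f(θ*,x) − f(w*,x)‖ ≤ L_f · λ‖g‖/λ_min(H)². -/
theorem famr_output_divergence_bound
    {n m : ℕ} {X : Type*}
    (f : EuclideanSpace ℝ (Fin n) → X → EuclideanSpace ℝ (Fin m))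
    (Lf : ℝ) (hLf : 0 ≤ Lf)
    (hlip : ∀ (x : X) (θ θ' : EuclideanSpace ℝ (Fin n)),
      ‖f θ x - f θ' x‖ ≤ Lf * ‖θ - θ'‖)
    (H : Matrix (Fin n) (Fin n) ℝ) (hH : H.PosDef)
    (μ : ℝ) (hμ : 0 < μ)
    (hmin : ∀ v : EuclideanSpace ℝ (Fin n), μ * ‖v‖ ^ 2 ≤ ⟪v, (WithLp.equiv 2 (Fin n → ℝ)).symm (H.mulVec v)⟫)
    (g θ₀ ws θs : EuclideanSpace ℝ (Fin n)) (lam : ℝ) (hlam : 0 < lam)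
    (hws : ws = θ₀ - (WithLp.equiv 2 (Fin n → ℝ)).symm (H⁻¹.mulVec g))
    (hθs : θs = θ₀ - (WithLp.equiv 2 (Fin n → ℝ)).symm ((H + lam • (1 : Matrix (Fin n) (Fin n) ℝ))⁻¹.mulVec g)) :
    ∀ x : X, ‖f θs x - f ws x‖ ≤ Lf * (lam * ‖g‖ / μ ^ 2) :=
  famr_output_divergence_bound_general f Lf hLf hlip H μ hμ hmin g θ₀ ws θs lam hlam hws hθs
end

section
/- Let L be μ-strongly convex and differentiable on ℝⁿ with minimizer w*, and define θ*(λ) as the minimizer of L(θ) + (λ/2)‖θ − θ₀‖². Then ‖θ*(λ) − w*‖ ≤ (λ/μ)‖θ₀ − w*‖ for every λ > 0; in particular θ*(λ) → w* linearly in λ as λ → 0. -/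
/-!
At the anchored minimizer `p = θ*(λ)` the gradient of `L + (λ/2)‖· - θ₀‖²` vanishes. That
gradient, `∇L + λ (· - θ₀)`, is `(μ + λ)`-strongly monotone, and at `w*` it equals
`λ (w* - θ₀)` because `∇L w* = 0`. Strong monotonicity between a zero `p` of a map and any
point `x` gives `(μ + λ)‖p - x‖ ≤ ‖G x‖`; with `x = w*` this is
`(μ + λ)‖θ*(λ) - w*‖ ≤ λ‖θ₀ - w*‖`, which is sharper than the claimed bound.
-/

open scoped RealInnerProductSpace

open Set Filter Topology InnerProductSpace

variable {E : Type*} [NormedAddCommGroup E] [InnerProductSpace ℝ E]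

def StronglyMonotone (m : ℝ) (G : E → E) : Prop :=
  ∀ a b, m * ‖a - b‖ ^ 2 ≤ ⟪G a - G b, a - b⟫

theorem StronglyMonotone.add_smul_sub {m : ℝ} {G : E → E} (hG : StronglyMonotone m G)
    (c : ℝ) (x₀ : E) : StronglyMonotone (m + c) (fun x => G x + c • (x - x₀)) := by
  intro a b
  have hab : G a + c • (a - x₀) - (G b + c • (b - x₀)) = (G a - G b) + c • (a - b) := by module
  rw [hab, inner_add_left, real_inner_smul_left, real_inner_self_eq_norm_sq]
  linarith [hG a b]

theorem StronglyMonotone.mul_norm_sub_le_norm {m : ℝ} {G : E → E} (hG : StronglyMonotone m G)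
    {p : E} (hp : G p = 0) (x : E) : m * ‖p - x‖ ≤ ‖G x‖ := by
  rcases (norm_nonneg (p - x)).eq_or_lt with hpx | hpx
  · rw [← hpx, mul_zero]
    exact norm_nonneg _
  · refine le_of_mul_le_mul_right ?_ hpx
    calc m * ‖p - x‖ * ‖p - x‖ = m * ‖p - x‖ ^ 2 := by ring
      _ ≤ ⟪G p - G x, p - x⟫ := hG p x
      _ = -⟪G x, p - x⟫ := by rw [hp, zero_sub, inner_neg_left]
      _ ≤ ‖G x‖ * ‖p - x‖ := (neg_le_abs _).trans (abs_real_inner_le_norm _ _)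

section Gradient

variable [CompleteSpace E]

theorem IsLocalMin.hasGradientAt_eq_zero {f : E → ℝ} {g a : E} (h : IsLocalMin f a)
    (hf : HasGradientAt f g a) : g = 0 :=
  (toDual ℝ E).map_eq_zero_iff.1 (h.hasFDerivAt_eq_zero hf)

theorem HasGradientAt.add_half_mul_norm_sub_sq {f : E → ℝ} {g x : E} (hf : HasGradientAt f g x)
    (c : ℝ) (x₀ : E) :
    HasGradientAt (fun θ => f θ + c / 2 * ‖θ - x₀‖ ^ 2) (g + c • (x - x₀)) x := by
  rw [hasGradientAt_iff_hasFDerivAt] at hf ⊢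
  refine (hf.add (((hasFDerivAt_sub_const x₀).norm_sq).const_mul (c / 2))).congr_fderiv ?_
  ext v
  simp only [map_add, map_sub, map_smul, ContinuousLinearMap.comp_id,
    add_apply, smul_apply, sub_apply,
    toDual_apply_apply, coe_innerSL_apply, real_inner_comm v, nsmul_eq_mul, Nat.cast_ofNat,
    smul_eq_mul, add_right_inj]
  ring

theorem norm_sub_le_of_isMinOn_add_half_mul_norm_sub_sq {L : E → ℝ} {gradL : E → E}
    (hgrad : ∀ θ, HasGradientAt L (gradL θ) θ) {μ : ℝ} (hμ : 0 < μ)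
    (hsc : StronglyMonotone μ gradL) {ws : E} (hws : IsMinOn L univ ws) {θ₀ p : E} {lam : ℝ}
    (hlam : 0 ≤ lam) (hp : IsMinOn (fun θ => L θ + lam / 2 * ‖θ - θ₀‖ ^ 2) univ p) :
    ‖p - ws‖ ≤ lam / μ * ‖θ₀ - ws‖ := by
  have hws0 : gradL ws = 0 := (hws.isLocalMin univ_mem).hasGradientAt_eq_zero (hgrad ws)
  have hp0 : gradL p + lam • (p - θ₀) = 0 :=
    (hp.isLocalMin univ_mem).hasGradientAt_eq_zero ((hgrad p).add_half_mul_norm_sub_sq lam θ₀)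
  have key : (μ + lam) * ‖p - ws‖ ≤ lam * ‖θ₀ - ws‖ := by
    simpa [hws0, norm_smul, abs_of_nonneg hlam, norm_sub_rev] using
      (hsc.add_smul_sub lam θ₀).mul_norm_sub_le_norm hp0 ws
  rw [div_mul_eq_mul_div, le_div_iff₀ hμ]
  linarith [mul_nonneg hlam (norm_nonneg (p - ws))]

end Gradient

/-- if L is μ-strongly convex (monotone gradient inequality) with minimizer
w*, and θ*(λ) minimizes L(θ) + (λ/2)‖θ − θ₀‖², then
‖θ*(λ) − w*‖ ≤ (λ/μ)‖θ₀ − w*‖ for every λ > 0, so θ*(λ) → w* as λ → 0⁺. -/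
theorem famr_strongly_convex_approximation_bound
    {n : ℕ} (L : EuclideanSpace ℝ (Fin n) → ℝ)
    (gradL : EuclideanSpace ℝ (Fin n) → EuclideanSpace ℝ (Fin n))
    (hgrad : ∀ θ, HasGradientAt L (gradL θ) θ)
    (μ : ℝ) (hμ : 0 < μ)
    (hsc : ∀ a b : EuclideanSpace ℝ (Fin n),
      μ * ‖a - b‖ ^ 2 ≤ ⟪gradL a - gradL b, a - b⟫)
    (ws : EuclideanSpace ℝ (Fin n)) (hws : IsMinOn L Set.univ ws)
    (θ₀ : EuclideanSpace ℝ (Fin n))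
    (θstar : ℝ → EuclideanSpace ℝ (Fin n))
    (hθstar : ∀ lam : ℝ, 0 < lam →
      IsMinOn (fun θ => L θ + lam / 2 * ‖θ - θ₀‖ ^ 2) Set.univ (θstar lam)) :
    (∀ lam : ℝ, 0 < lam → ‖θstar lam - ws‖ ≤ lam / μ * ‖θ₀ - ws‖) ∧
    Filter.Tendsto θstar (nhdsWithin 0 (Set.Ioi 0)) (nhds ws) := by
  have hbound : ∀ lam : ℝ, 0 < lam → ‖θstar lam - ws‖ ≤ lam / μ * ‖θ₀ - ws‖ :=
    fun lam hlam => norm_sub_le_of_isMinOn_add_half_mul_norm_sub_sq hgrad hμ hsc hws hlam.le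
      (hθstar lam hlam)
  refine ⟨hbound, tendsto_iff_norm_sub_tendsto_zero.2 ?_⟩
  have hlinear : Tendsto (fun lam : ℝ => lam / μ * ‖θ₀ - ws‖) (𝓝[>] 0) (𝓝 0) := by
    have hcont : Continuous (fun lam : ℝ => lam / μ * ‖θ₀ - ws‖) := by fun_prop
    simpa using hcont.continuousWithinAt.tendsto (x := 0) (s := Ioi 0)
  exact squeeze_zero' (.of_forall fun _ => norm_nonneg _)
    (eventually_nhdsWithin_of_forall hbound) hlinear
end
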